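/- arXiv:1208.2150 — 2 statements merged into one kernel-verified Lean document; each statement's English description precedes it below -/
import Mathlib

section
/- Abstract shift lemma: Let H be a real inner product space, let L₀ be an invertible linear operator on a subspace H₀ of mean-zero elements with projection P onto H₀, and let a⁺, a⁻ be mutually adjoint linear maps with a⁻1 = 0. Define f_0 = 1, f_j = (-L̂₀)^{-1} a⁺ f_{j-1} (with L̂₀ the adjoint of L₀, all inverses mapping into H₀), and φ_0 = (-L₀)^{-1} P(p), φ_j = (-L₀)^{-1} P(a⁻ φ_{j-1}) + c_j for scalars c_j. Then for all m ≥ 0 and all k ≥ m: ⟨a⁻φ_0, f_k⟩ = ⟨a⁻φ_m, f_{k-m}⟩. -/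
/-! Both recursions are driven by mutually adjoint pairs: `L₀` against `L̂₀` on mean-zero
vectors, and `a⁺` against `a⁻`. Hence one step of the `f`-recursion can be traded for one step
of the `φ`-recursion, `⟨a⁻φ_j, f_{k+1}⟩ = ⟨a⁻φ_{j+1}, f_k⟩`; the projection `P` and the
constants `c_j` are invisible because `f_{k+1}` is mean-zero and `a⁻` kills `1`.
Iterating this step `m` times gives the lemma. -/

open scoped RealInnerProductSpace

theorem Nat.apply_zero_add_eq_of_shift {α : Type*} {a : ℕ → ℕ → α}
    (h : ∀ j k, a j (k + 1) = a (j + 1) k) (m n : ℕ) : a 0 (m + n) = a m n := by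
  induction m generalizing n with
  | zero => rw [Nat.zero_add]
  | succ m ih => rw [Nat.add_right_comm, Nat.add_assoc, ih, h]

section ShiftStep

variable {H : Type*} [NormedAddCommGroup H] [InnerProductSpace ℝ H]

theorem real_inner_sub_inner_smul_left_of_inner_eq_zero {one v : H} (u : H)
    (hv : ⟪one, v⟫ = 0) : ⟪u - ⟪one, u⟫ • one, v⟫ = ⟪u, v⟫ := by
  rw [inner_sub_left, real_inner_smul_left, hv, mul_zero, sub_zero]

theorem inner_aminus_shift {one : H} {L0 Lhat aplus aminus : H →ₗ[ℝ] H}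
    (hadjL : ∀ u v, ⟪one, u⟫ = 0 → ⟪one, v⟫ = 0 → ⟪L0 u, v⟫ = ⟪u, Lhat v⟫)
    (hadja : ∀ u v, ⟪aplus u, v⟫ = ⟪u, aminus v⟫)
    {ψ ψ' g g' : H} (hψ' : ⟪one, ψ'⟫ = 0) (hLψ' : L0 ψ' = -(aminus ψ - ⟪one, aminus ψ⟫ • one))
    (hg' : ⟪one, g'⟫ = 0) (hLg' : Lhat g' = -(aplus g)) :
    ⟪aminus ψ, g'⟫ = ⟪aminus ψ', g⟫ :=
  calc ⟪aminus ψ, g'⟫ = ⟪aminus ψ - ⟪one, aminus ψ⟫ • one, g'⟫ :=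
        (real_inner_sub_inner_smul_left_of_inner_eq_zero _ hg').symm
    _ = -⟪L0 ψ', g'⟫ := by rw [hLψ', inner_neg_left, neg_neg]
    _ = ⟪ψ', aplus g⟫ := by rw [hadjL _ _ hψ' hg', hLg', inner_neg_right, neg_neg]
    _ = ⟪aminus ψ', g⟫ := by rw [real_inner_comm, hadja, real_inner_comm]

end ShiftStep

theorem abstract_shift_lemma_general {H : Type*} [NormedAddCommGroup H] [InnerProductSpace ℝ H]
    (one : H)
    (L0 Lhat aplus aminus : H →ₗ[ℝ] H)
    (hadjL : ∀ u v, ⟪one, u⟫ = 0 → ⟪one, v⟫ = 0 → ⟪L0 u, v⟫ = ⟪u, Lhat v⟫)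
    (hadja : ∀ u v, ⟪aplus u, v⟫ = ⟪u, aminus v⟫)
    (haminone : aminus one = 0)
    (f : ℕ → H)
    (hf : ∀ j : ℕ, ⟪one, f (j + 1)⟫ = 0 ∧ Lhat (f (j + 1)) = -(aplus (f j)))
    (φ : ℕ → H) (c : ℕ → ℝ)
    (hφ : ∀ j : ℕ, ⟪one, φ (j + 1) - c (j + 1) • one⟫ = 0 ∧
      L0 (φ (j + 1) - c (j + 1) • one)
        = -(aminus (φ j) - ⟪one, aminus (φ j)⟫ • one)) :
    ∀ m k : ℕ, m ≤ k → ⟪aminus (φ 0), f k⟫ = ⟪aminus (φ m), f (k - m)⟫ := by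
  have step : ∀ j k, ⟪aminus (φ j), f (k + 1)⟫ = ⟪aminus (φ (j + 1)), f k⟫ := by
    intro j k
    have hconst : aminus (φ (j + 1) - c (j + 1) • one) = aminus (φ (j + 1)) := by
      rw [map_sub, map_smul, haminone, smul_zero, sub_zero]
    rw [inner_aminus_shift hadjL hadja (hφ j).1 (hφ j).2 (hf k).1 (hf k).2, hconst]
  intro m k hmk
  obtain ⟨n, rfl⟩ := Nat.exists_eq_add_of_le hmk
  rw [Nat.add_sub_cancel_left]
  exact Nat.apply_zero_add_eq_of_shift (a := fun j k => ⟪aminus (φ j), f k⟫) step m n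

/-- Abstract shift lemma: with `f_0 = 1`, `f_j = (-L̂₀)⁻¹ a⁺ f_{j-1}`,
`φ_0 = (-L₀)⁻¹ P p` and `φ_j = (-L₀)⁻¹ P (a⁻ φ_{j-1}) + c_j`, one has
`⟨a⁻φ_0, f_k⟩ = ⟨a⁻φ_m, f_{k-m}⟩` for all `m ≤ k`. -/
theorem abstract_shift_lemma {H : Type*} [NormedAddCommGroup H] [InnerProductSpace ℝ H]
    (one p : H) (hone : ⟪one, one⟫ = 1)
    (L0 Lhat aplus aminus : H →ₗ[ℝ] H)
    (hL0mem : ∀ u, ⟪one, u⟫ = 0 → ⟪one, L0 u⟫ = 0)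
    (hLhatmem : ∀ u, ⟪one, u⟫ = 0 → ⟪one, Lhat u⟫ = 0)
    (hadjL : ∀ u v, ⟪one, u⟫ = 0 → ⟪one, v⟫ = 0 → ⟪L0 u, v⟫ = ⟪u, Lhat v⟫)
    (hadja : ∀ u v, ⟪aplus u, v⟫ = ⟪u, aminus v⟫)
    (haminone : aminus one = 0)
    (f : ℕ → H) (hf0 : f 0 = one)
    (hf : ∀ j : ℕ, ⟪one, f (j + 1)⟫ = 0 ∧ Lhat (f (j + 1)) = -(aplus (f j)))
    (φ : ℕ → H) (c : ℕ → ℝ)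
    (hφ0 : ⟪one, φ 0⟫ = 0 ∧ L0 (φ 0) = -(p - ⟪one, p⟫ • one))
    (hφ : ∀ j : ℕ, ⟪one, φ (j + 1) - c (j + 1) • one⟫ = 0 ∧
      L0 (φ (j + 1) - c (j + 1) • one)
        = -(aminus (φ j) - ⟪one, aminus (φ j)⟫ • one)) :
    ∀ m k : ℕ, m ≤ k → ⟪aminus (φ 0), f k⟫ = ⟪aminus (φ m), f (k - m)⟫ :=
  abstract_shift_lemma_general one L0 Lhat aplus aminus hadjL hadja haminone f hf φ c hφ
end

section
/- In the setting of the abstract shift lemma, the solvability condition holds at every order: for all j ≥ 1, V_j := β^{-1}⟨1, a⁻ K̂^j 1⟩ = ⟨a⁻ φ_{j-1}, 1⟩, where K̂ = (-L̂₀)^{-1} a⁺ and the φ_j are defined by φ_0 = (-L₀)^{-1}P(p) with p = β^{-1}a⁺1 and φ_j = (-L₀)^{-1}P(a⁻φ_{j-1}) + c_j. -/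
open scoped RealInnerProductSpace

/-- Solvability condition at every order: `V_j = β⁻¹⟨1, a⁻ K̂^j 1⟩ = ⟨a⁻φ_{j-1}, 1⟩`
where `K̂ = (-L̂₀)⁻¹ a⁺` and `φ_j` solve the hierarchy of Poisson equations. -/
theorem solvability_condition {H : Type*} [NormedAddCommGroup H] [InnerProductSpace ℝ H]
    (one p : H) (hone : ⟪one, one⟫ = 1)
    (L0 Lhat aplus aminus : H →ₗ[ℝ] H)
    (hL0mem : ∀ u, ⟪one, u⟫ = 0 → ⟪one, L0 u⟫ = 0)
    (hLhatmem : ∀ u, ⟪one, u⟫ = 0 → ⟪one, Lhat u⟫ = 0)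
    (hadjL : ∀ u v, ⟪one, u⟫ = 0 → ⟪one, v⟫ = 0 → ⟪L0 u, v⟫ = ⟪u, Lhat v⟫)
    (hadja : ∀ u v, ⟪aplus u, v⟫ = ⟪u, aminus v⟫)
    (haminone : aminus one = 0)
    (β : ℝ) (hβ : 0 < β) (hp : p = β⁻¹ • aplus one) (hpmean : ⟪one, p⟫ = 0)
    (Khat : H →ₗ[ℝ] H)
    (hKhat : ∀ u, ⟪one, Khat u⟫ = 0 ∧ Lhat (Khat u) = -(aplus u))
    (φ : ℕ → H) (c : ℕ → ℝ)
    (hφ0 : ⟪one, φ 0⟫ = 0 ∧ L0 (φ 0) = -p)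
    (hφ : ∀ j : ℕ, ⟪one, φ (j + 1) - c (j + 1) • one⟫ = 0 ∧
      L0 (φ (j + 1) - c (j + 1) • one)
        = -(aminus (φ j) - ⟪one, aminus (φ j)⟫ • one)) :
    ∀ j : ℕ, 1 ≤ j →
      β⁻¹ * ⟪one, aminus ((Khat ^ j) one)⟫ = ⟪aminus (φ (j - 1)), one⟫ := by
  -- mean-zero of Khat powers
  have hKpow : ∀ n : ℕ, ⟪one, (Khat ^ (n + 1)) one⟫ = 0 := by
    intro n
    rw [pow_succ']
    exact (hKhat ((Khat ^ n) one)).1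
  have hKpowL : ∀ n : ℕ, Lhat ((Khat ^ (n + 1)) one) = -(aplus ((Khat ^ n) one)) := by
    intro n
    rw [pow_succ']
    exact (hKhat ((Khat ^ n) one)).2
  -- key induction
  have key : ∀ n k : ℕ, ⟪(Khat ^ n) one, aminus (φ k)⟫ = ⟪one, aminus (φ (n + k))⟫ := by
    intro n
    induction n with
    | zero => intro k; simp
    | succ n ih =>
      intro k
      set v := (Khat ^ (n + 1)) one with hv
      set u := φ (k + 1) - c (k + 1) • one with hu
      have humean : ⟪one, u⟫ = 0 := (hφ k).1
      have hvmean : ⟪one, v⟫ = 0 := hKpow n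
      have hL0u : L0 u = -(aminus (φ k) - ⟪one, aminus (φ k)⟫ • one) := (hφ k).2
      have h1 : ⟪v, aminus (φ k)⟫
          = -⟪L0 u, v⟫ + ⟪one, aminus (φ k)⟫ * ⟪v, one⟫ := by
        rw [show (⟪L0 u, v⟫ : ℝ) = ⟪v, L0 u⟫ from real_inner_comm _ _, hL0u]
        simp [inner_sub_right, inner_smul_right]
      have h2 : ⟪v, one⟫ = 0 := by rw [real_inner_comm]; exact hvmean
      have h3 : ⟪L0 u, v⟫ = -⟪(Khat ^ n) one, aminus u⟫ := by
        rw [hadjL u v humean hvmean, hv, hKpowL n, inner_neg_right,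
          real_inner_comm, hadja]
      have h4 : aminus u = aminus (φ (k + 1)) := by
        rw [hu, map_sub, map_smul, haminone, smul_zero, sub_zero]
      have hidx : n + (k + 1) = n + 1 + k := by omega
      rw [h1, h2, h3, h4, neg_neg, mul_zero, add_zero, ih (k + 1), hidx]
  intro j hj
  obtain ⟨n, rfl⟩ : ∃ n, j = n + 1 := ⟨j - 1, by omega⟩
  have hβne : β ≠ 0 := hβ.ne'
  have haplusone : aplus one = β • p := by
    rw [hp, smul_smul, mul_inv_cancel₀ hβne, one_smul]
  have hstep1 : ⟪one, aminus ((Khat ^ (n + 1)) one)⟫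
      = β * ⟪p, (Khat ^ (n + 1)) one⟫ := by
    rw [← hadja, haplusone, inner_smul_left, RCLike.conj_to_real]
  have hφ0mean : ⟪one, φ 0⟫ = 0 := hφ0.1
  have hstep2 : ⟪p, (Khat ^ (n + 1)) one⟫ = ⟪(Khat ^ n) one, aminus (φ 0)⟫ := by
    have : p = -(L0 (φ 0)) := by rw [hφ0.2, neg_neg]
    rw [this, inner_neg_left, hadjL (φ 0) _ hφ0mean (hKpow n), hKpowL n,
      inner_neg_right, neg_neg, real_inner_comm, hadja]
  rw [hstep1, hstep2, key n 0, ← mul_assoc, inv_mul_cancel₀ hβne, one_mul,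
    real_inner_comm]
  norm_num
end
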